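/- Let A be a finite set of integers with φ(A) ≤ k, and suppose A₁, …, A_{k+1} are pairwise disjoint subsets of A each of size at least k+2. Then there exist 1 ≤ i < j ≤ k+1 and elements aᵢ ∈ Aᵢ, aⱼ ∈ Aⱼ with aᵢ + aⱼ ∈ A. -/

import Mathlib

/-- `phi A` is the maximum cardinality of a subset `B ⊆ A` that is sum-avoiding in `A`. -/
def phi (A : Finset ℤ) : ℕ :=
  ((A.powerset).filter (fun B => ∀ b₁ ∈ B, ∀ b₂ ∈ B, b₁ ≠ b₂ → b₁ + b₂ ∉ A)).sup Finset.card

/-! Choosing one element `a i` from each block gives `k + 1` distinct elements of `A`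
(the blocks are disjoint), no two of which sum into `A`; this contradicts `phi A ≤ k`. -/

open Finset

theorem card_le_phi {A B : Finset ℤ} (hBA : B ⊆ A)
    (hB : ∀ b₁ ∈ B, ∀ b₂ ∈ B, b₁ ≠ b₂ → b₁ + b₂ ∉ A) : #B ≤ phi A :=
  le_sup (f := card) (mem_filter.2 ⟨mem_powerset.2 hBA, hB⟩)

theorem Function.injective_of_mem_of_pairwise_disjoint {ι α : Type*} {s : ι → Finset α}
    {a : ι → α} (ha : ∀ i, a i ∈ s i) (hdisj : ∀ i j, i ≠ j → Disjoint (s i) (s j)) :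
    Function.Injective a := by
  intro i j hij
  by_contra hne
  exact disjoint_left.mp (hdisj i j hne) (ha i) (hij ▸ ha j)

theorem disjoint_pigeonhole_int (k : ℕ) (A : Finset ℤ) (hphi : phi A ≤ k)
    (As : Fin (k + 1) → Finset ℤ)
    (hdisj : ∀ i j, i ≠ j → Disjoint (As i) (As j))
    (hsub : ∀ i, As i ⊆ A)
    (hcard : ∀ i, k + 2 ≤ (As i).card) :
    ∃ i j : Fin (k + 1), i < j ∧ ∃ a ∈ As i, ∃ b ∈ As j, a + b ∈ A := by
  by_contra! h
  have hne : ∀ i, (As i).Nonempty := fun i => card_pos.mp (by grind)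
  choose a ha using hne
  have ha_inj := Function.injective_of_mem_of_pairwise_disjoint ha hdisj
  have hsumfree : ∀ b₁ ∈ univ.image a, ∀ b₂ ∈ univ.image a, b₁ ≠ b₂ → b₁ + b₂ ∉ A := by
    simp only [mem_image, mem_univ, true_and]
    rintro _ ⟨i, rfl⟩ _ ⟨j, rfl⟩ hij
    rcases lt_or_gt_of_ne (ha_inj.ne_iff.mp hij) with hlt | hlt
    · exact h i j hlt _ (ha i) _ (ha j)
    · exact add_comm (a j) (a i) ▸ h j i hlt _ (ha j) _ (ha i)
  have hle := card_le_phi (image_subset_iff.2 fun i _ => hsub i (ha i)) hsumfree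
  rw [card_image_of_injective _ ha_inj, card_univ, Fintype.card_fin] at hle
  omega
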